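/- arXiv:1107.3852 — 3 statements merged into one kernel-verified Lean document; each statement's English description precedes it below -/
import Mathlib

section
/- For a positive integer j, the sequence C formally satisfies the recursion R(n) = R(n - R(n-j)) + R(n - 2j - R(n-3j)): for every integer n, C(n) = C(n - C(n-j)) + C(n - 2j - C(n-3j)). -/
/-!
The `2j` ceilings `⌈(m - i) / 2j⌉`, `0 ≤ i < 2j`, add up to `m` (a form of Hermite's identity), and
splitting them into the first and the last `j` gives `C m + C (m - j) = m`. Applied at `n`, `n - j`
and `n - 2j` this turns the two arguments on the right into `C n` and `C n - j`, whose values again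
add up to `C n`.
-/

def C (j : ℕ) (n : ℤ) : ℤ := ∑ i ∈ Finset.range j, ⌈((n : ℚ) - i) / (2 * j)⌉

open Finset

section Hermite

variable {K : Type*} [Field K] [LinearOrder K] [IsStrictOrderedRing K] [FloorRing K]

theorem sum_range_ceil_intCast_sub_div {k : ℕ} (hk : 0 < k) (a : ℤ) :
    ∑ i ∈ range k, ⌈((a : K) - i) / k⌉ = a := by
  have hk' : (k : K) ≠ 0 := by positivity
  have step (a : ℤ) : ∑ i ∈ range k, ⌈(((a + 1 : ℤ) : K) - i) / k⌉ =
      ∑ i ∈ range k, ⌈((a : K) - i) / k⌉ + 1 := by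
    have h := (sum_range_succ' (fun i => ⌈(((a + 1 : ℤ) : K) - i) / k⌉) k).symm.trans
      (sum_range_succ _ k)
    have hlast : (((a + 1 : ℤ) : K) - k) / k = ((a + 1 : ℤ) : K) / k - 1 := by
      field_simp
    simp only [hlast, Int.ceil_sub_one, Nat.cast_zero, sub_zero, Nat.cast_succ] at h
    have hshift (i : ℕ) : ((a + 1 : ℤ) : K) - (i + 1) = a - i := by push_cast; ring
    simp only [hshift] at h
    linarith
  induction a using Int.induction_on with
  | zero =>
    refine sum_eq_zero fun i hi => Int.ceil_eq_iff.mpr ⟨?_, ?_⟩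
    · rw [lt_div_iff₀ (by positivity)]
      have : (i : K) < k := by exact_mod_cast mem_range.mp hi
      push_cast
      linarith
    · push_cast
      exact div_nonpos_of_nonpos_of_nonneg (by simp) (by positivity)
  | succ a ih => rw [step, ih]
  | pred a ih => have := step (-(a : ℤ) - 1); simp only [sub_add_cancel] at this; linarith

end Hermite

theorem C_add_C_sub {j : ℕ} (hj : 0 < j) (m : ℤ) : C j m + C j (m - j) = m := by
  have h := sum_range_ceil_intCast_sub_div (K := ℚ) (k := j + j) (by omega) m
  rw [sum_range_add] at h
  push_cast at h
  simpa only [← two_mul, ← sub_sub, C, Int.cast_sub, Int.cast_natCast] using h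

theorem stmt7 (j : ℕ) (hj : 0 < j) (n : ℤ) :
    C j n = C j (n - C j (n - j)) + C j (n - 2 * j - C j (n - 3 * j)) := by
  have h1 := C_add_C_sub hj n
  have h2 := C_add_C_sub hj (n - j)
  have h3 := C_add_C_sub hj (n - 2 * j)
  rw [sub_sub, ← two_mul] at h2
  rw [sub_sub, show 2 * (j : ℤ) + j = 3 * j by ring] at h3
  rw [show n - C j (n - j) = C j n by linarith,
    show n - 2 * j - C j (n - 3 * j) = C j n - j by linarith, C_add_C_sub hj]
end

section
/- Let j be a positive integer and s_1, a_1, s_2, a_2, d be integers. Define h(n) = C(n - s_1 - C(n - a_1)) + C(n - s_2 - C(n - a_2)) - C(n). Then h(n + 4jd) = h(n) for all integers n. -/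
theorem C_add_two_mul_mul (j : ℕ) (n k : ℤ) : C j (n + 2 * j * k) = C j n + j * k := by
  rcases Nat.eq_zero_or_pos j with rfl | hj
  · simp [C]
  have hjq : (j : ℚ) ≠ 0 := by exact_mod_cast hj.ne'
  have hterm : ∀ i ∈ Finset.range j,
      ⌈(((n + 2 * j * k : ℤ) : ℚ) - i) / (2 * j)⌉ = ⌈((n : ℚ) - i) / (2 * j)⌉ + k := by
    intro i _
    have : (((n + 2 * j * k : ℤ) : ℚ) - i) / (2 * j) = ((n : ℚ) - i) / (2 * j) + k := by
      push_cast
      field_simp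
      ring
    rw [this, Int.ceil_add_intCast]
  simp only [C]
  rw [Finset.sum_congr rfl hterm, Finset.sum_add_distrib, Finset.sum_const, Finset.card_range,
    nsmul_eq_mul]

theorem C_sub_C_add_four_mul_mul (j : ℕ) (n s a d : ℤ) :
    C j (n + 4 * j * d - s - C j (n + 4 * j * d - a)) = C j (n - s - C j (n - a)) + j * d := by
  have hinner : C j (n + 4 * j * d - a) = C j (n - a) + j * (2 * d) := by
    rw [← C_add_two_mul_mul]
    ring_nf
  rw [hinner, ← C_add_two_mul_mul j (n - s - C j (n - a)) d]
  ring_nf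

theorem stmt13_general (j : ℕ) (s₁ a₁ s₂ a₂ d : ℤ) (n : ℤ) :
    C j (n + 4 * j * d - s₁ - C j (n + 4 * j * d - a₁)) +
        C j (n + 4 * j * d - s₂ - C j (n + 4 * j * d - a₂)) - C j (n + 4 * j * d) =
      C j (n - s₁ - C j (n - a₁)) + C j (n - s₂ - C j (n - a₂)) - C j n := by
  rw [C_sub_C_add_four_mul_mul, C_sub_C_add_four_mul_mul,
    show n + 4 * j * d = n + 2 * j * (2 * d) by ring, C_add_two_mul_mul]
  ring

theorem stmt13 (j : ℕ) (hj : 0 < j) (s₁ a₁ s₂ a₂ d : ℤ) (n : ℤ) :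
    C j (n + 4 * j * d - s₁ - C j (n + 4 * j * d - a₁)) +
        C j (n + 4 * j * d - s₂ - C j (n + 4 * j * d - a₂)) - C j (n + 4 * j * d) =
      C j (n - s₁ - C j (n - a₁)) + C j (n - s₂ - C j (n - a₂)) - C j n :=
  stmt13_general j s₁ a₁ s₂ a₂ d n
end

section
/- Let j be a positive integer and s_1, a_1, s_2, a_2 integers satisfying: (i) j divides s_1 and j divides s_2; (ii) a_1 \equiv j (mod 2j) and a_2 \equiv j (mod 2j); (iii) 2(s_1 + s_2) = a_1 + a_2. Then for all integers n, C(n) = C(n - s_1 - C(n - a_1)) + C(n - s_2 - C(n - a_2)). -/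
/-!
Splitting the window of `2j` terms in half, Hermite's identity `∑_{i<2j} ⌈(m - i)/2j⌉ = m` reads
`C(m) + C(m - j) = m`. This functional equation alone forces `C(m + 2jt) = C(m) + jt`; the
hypotheses then make the two arguments on the right-hand side of the form `x` and `x - j - 2jt`
with `x - jt = C(n)`, and the same two facts give `C(x) + C(x - j - 2jt) = x - jt`.
-/

open Finset

section Hermite

variable {K : Type*} [Field K] [LinearOrder K] [IsStrictOrderedRing K] [FloorRing K]

lemma sum_range_ceil_sub_div_add_one {d : ℕ} (hd : 0 < d) (m : ℤ) :
    ∑ i ∈ range d, ⌈(((m + 1 : ℤ) : K) - i) / d⌉ = ∑ i ∈ range d, ⌈((m : K) - i) / d⌉ + 1 := by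
  set g : ℕ → ℤ := fun i ↦ ⌈(((m + 1 : ℤ) : K) - i) / d⌉
  have hshift : ∀ i : ℕ, ⌈((m : K) - i) / d⌉ = g (i + 1) := fun i ↦ by
    simp only [g]; push_cast; ring_nf
  have hend : g d = g 0 - 1 := by
    simp only [g, ← Int.ceil_sub_one]
    congr 1
    field_simp
    ring
  simp only [hshift]
  linarith [sum_range_sub' g d, sum_sub_distrib (s := range d) g (fun i ↦ g (i + 1))]

/-- Hermite's identity at integer points. -/
lemma sum_range_ceil_sub_div {d : ℕ} (hd : 0 < d) (m : ℤ) :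
    ∑ i ∈ range d, ⌈((m : K) - i) / d⌉ = m := by
  induction m using Int.induction_on with
  | zero =>
    refine sum_eq_zero fun i hi ↦ Int.ceil_eq_zero_iff.mpr ⟨?_, ?_⟩
    · have : (i : K) < d := by exact_mod_cast mem_range.mp hi
      rw [lt_div_iff₀ (by positivity)]
      push_cast
      linarith
    · push_cast
      exact div_nonpos_of_nonpos_of_nonneg (by simp) (by positivity)
  | succ m ih => rw [sum_range_ceil_sub_div_add_one hd, ih]
  | pred m ih =>
    have := sum_range_ceil_sub_div_add_one (K := K) hd (-m - 1)
    rw [sub_add_cancel, ih] at this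
    linarith

end Hermite

/-- E.g. `m ↦ ⌈m / 2⌉` for `j = 1`. -/
def IsHalving (j : ℤ) (f : ℤ → ℤ) : Prop := ∀ m, f m + f (m - j) = m

namespace IsHalving

variable {f : ℤ → ℤ} {j : ℤ}

lemma add_two_mul (hf : IsHalving j f) (m : ℤ) : f (m + 2 * j) = f m + j := by
  have h₁ := hf (m + 2 * j)
  have h₂ := hf (m + j)
  rw [show m + 2 * j - j = m + j by ring] at h₁
  rw [add_sub_cancel_right] at h₂
  linarith

lemma add_two_mul_mul (hf : IsHalving j f) (m t : ℤ) : f (m + 2 * j * t) = f m + j * t := by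
  induction t using Int.induction_on with
  | zero => simp
  | succ t ih =>
    rw [show m + 2 * j * (t + 1) = m + 2 * j * t + 2 * j by ring, hf.add_two_mul, ih]
    ring
  | pred t ih =>
    have := hf.add_two_mul (m + 2 * j * (-t - 1))
    rw [show m + 2 * j * (-t - 1) + 2 * j = m + 2 * j * (-t) by ring, ih] at this
    linarith

lemma add_sub_sub_two_mul_mul (hf : IsHalving j f) (m t : ℤ) :
    f m + f (m - j - 2 * j * t) = m - j * t := by
  have := hf.add_two_mul_mul (m - j) (-t)
  rw [show m - j + 2 * j * -t = m - j - 2 * j * t by ring] at this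
  linarith [hf m]

theorem nested_recurrence (hf : IsHalving j f) {s₁ a₁ s₂ a₂ : ℤ} (h₁ : j ∣ s₁) (h₂ : j ∣ s₂)
    (h₃ : a₁ ≡ j [ZMOD 2 * j]) (h₄ : a₂ ≡ j [ZMOD 2 * j]) (h₅ : 2 * (s₁ + s₂) = a₁ + a₂)
    (n : ℤ) : f n = f (n - s₁ - f (n - a₁)) + f (n - s₂ - f (n - a₂)) := by
  obtain ⟨u₁, rfl⟩ := h₁
  obtain ⟨u₂, rfl⟩ := h₂
  obtain ⟨t₁, ht₁⟩ := h₃.dvd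
  obtain ⟨t₂, ht₂⟩ := h₄.dvd
  have hf₁ : f (n - a₁) = n - f n + j * t₁ := by
    rw [show n - a₁ = n - j + 2 * j * t₁ by linarith, hf.add_two_mul_mul]
    linarith [hf n]
  have hf₂ : f (n - a₂) = n - f n + j * t₂ := by
    rw [show n - a₂ = n - j + 2 * j * t₂ by linarith, hf.add_two_mul_mul]
    linarith [hf n]
  have key := hf.add_sub_sub_two_mul_mul (f n - j * (u₁ + t₁)) (-(u₁ + t₁))
  rw [hf₁, hf₂]
  convert key.symm using 3 <;> linarith

end IsHalving

lemma isHalving_C (j : ℕ) (hj : 0 < j) : IsHalving j (C j) := fun m ↦ by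
  convert sum_range_ceil_sub_div (K := ℚ) (by omega : 0 < 2 * j) m using 1
  rw [two_mul, sum_range_add]
  unfold C
  push_cast
  congr 1 <;> refine sum_congr rfl fun i _ ↦ ?_ <;> ring_nf

theorem stmt14 (j : ℕ) (hj : 0 < j) (s₁ a₁ s₂ a₂ : ℤ)
    (h1 : (j : ℤ) ∣ s₁) (h2 : (j : ℤ) ∣ s₂)
    (h3 : a₁ % (2 * j) = (j : ℤ) % (2 * j))
    (h4 : a₂ % (2 * j) = (j : ℤ) % (2 * j))
    (h5 : 2 * (s₁ + s₂) = a₁ + a₂) :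
    ∀ n : ℤ, C j n = C j (n - s₁ - C j (n - a₁)) + C j (n - s₂ - C j (n - a₂)) :=
  (isHalving_C j hj).nested_recurrence h1 h2 h3 h4 h5
end
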